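/- arXiv:2508.06748 — 2 statements merged into one kernel-verified Lean document; each statement's English description precedes it below -/
import Mathlib

section
/- Let F : ℝ → [0,1] be a cumulative distribution function, let λ > 0, ε > 0, and t ∈ [0,1), and define the rescaled CDF F_λ(x) = F(x/λ). If d_KS(F, Φ) ≤ ε and |1 − λ| ≤ t, then d_KS(F_λ, Φ) ≤ ε + γ(t). -/
open Real Set Filter

/-- The standard Gaussian CDF. -/
noncomputable def Phi (x : ℝ) : ℝ := ∫ u in Set.Iic x, Real.exp (-u ^ 2 / 2) / Real.sqrt (2 * Real.pi)

/-- Kolmogorov–Smirnov distance between two CDFs. -/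
noncomputable def dKS (F G : ℝ → ℝ) : ℝ := ⨆ x : ℝ, |F x - G x|

/-- The deformed Gaussian CDF `Φ_t^+(x) = Φ(x / (1 − sgn(x)·t))`. -/
noncomputable def PhiPlus (t x : ℝ) : ℝ := Phi (x / (1 - Real.sign x * t))

/-- `γ(t) = sup_x (Φ_t^+(x) − Φ(x))`. -/
noncomputable def gammaFn (t : ℝ) : ℝ := ⨆ x : ℝ, (PhiPlus t x - Phi x)

open MeasureTheory

noncomputable def g0 (u : ℝ) : ℝ := Real.exp (-u ^ 2 / 2) / Real.sqrt (2 * Real.pi)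

lemma g0_integrable : Integrable g0 := by
  have h := integrable_exp_neg_mul_sq (by norm_num : (0:ℝ) < 1/2)
  have : g0 = fun x => Real.exp (-(1/2) * x ^ 2) / Real.sqrt (2 * Real.pi) := by
    funext x; simp [g0]; ring_nf
  rw [this]
  exact h.div_const _

lemma g0_nonneg (u : ℝ) : 0 ≤ g0 u :=
  div_nonneg (Real.exp_nonneg _) (Real.sqrt_nonneg _)

lemma Phi_eq (x : ℝ) : Phi x = ∫ u in Set.Iic x, g0 u := rfl

lemma Phi_mono : Monotone Phi := by
  intro a b hab
  rw [Phi_eq, Phi_eq]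
  exact setIntegral_mono_set g0_integrable.integrableOn
    (Eventually.of_forall fun u => g0_nonneg u)
    (HasSubset.Subset.eventuallyLE (Iic_subset_Iic.2 hab))

lemma Phi_nonneg (x : ℝ) : 0 ≤ Phi x :=
  setIntegral_nonneg measurableSet_Iic fun u _ => g0_nonneg u

lemma g0_total : ∫ u, g0 u = 1 := by
  have h := integral_gaussian (1/2 : ℝ)
  have : ∫ u, g0 u = (∫ u, Real.exp (-(1/2) * u ^ 2)) / Real.sqrt (2 * Real.pi) := by
    rw [← integral_div]; congr 1; funext x; simp [g0]; ring_nf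
  rw [this, h]
  rw [div_eq_one_iff_eq (by positivity)]
  rw [show Real.pi / (1/2) = 2 * Real.pi by ring]

lemma Phi_le_one (x : ℝ) : Phi x ≤ 1 := by
  rw [Phi_eq, ← g0_total]
  exact setIntegral_le_integral g0_integrable (Eventually.of_forall fun u => g0_nonneg u)

lemma Phi_sub_Phi (a b : ℝ) : Phi b - Phi a = ∫ u in a..b, g0 u := by
  rw [Phi_eq, Phi_eq]
  exact intervalIntegral.integral_Iic_sub_Iic g0_integrable.integrableOn g0_integrable.integrableOn

lemma Phi_reflect (a b : ℝ) : Phi b - Phi a = Phi (-a) - Phi (-b) := by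
  rw [Phi_sub_Phi, Phi_sub_Phi]
  rw [← intervalIntegral.integral_comp_neg (fun x => g0 x)]
  congr 1; funext x; simp [g0]

lemma gamma_ge (t : ℝ) (x : ℝ) : PhiPlus t x - Phi x ≤ gammaFn t := by
  apply le_ciSup (f := fun x => PhiPlus t x - Phi x)
  refine ⟨1, ?_⟩
  rintro y ⟨z, rfl⟩
  have h1 := Phi_le_one (z / (1 - Real.sign z * t))
  have h2 := Phi_nonneg z
  simp only [PhiPlus]
  linarith

lemma gamma_nonneg (t : ℝ) : 0 ≤ gammaFn t := by
  have := gamma_ge t 0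
  simp [PhiPlus, Real.sign_zero] at this
  linarith [this]

lemma Phi_dist_le (t lam : ℝ) (ht : t ∈ Set.Ico (0:ℝ) 1) (hlam : 0 < lam)
    (hclose : |1 - lam| ≤ t) (x : ℝ) : |Phi (x / lam) - Phi x| ≤ gammaFn t := by
  obtain ⟨ht0, ht1⟩ := ht
  have hlo : 1 - t ≤ lam := by
    have := abs_le.1 hclose; linarith [this.2]
  have hhi : lam ≤ 1 + t := by
    have := abs_le.1 hclose; linarith [this.1]
  have h1t : (0:ℝ) < 1 - t := by linarith
  have h1t' : (0:ℝ) < 1 + t := by linarith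
  rw [abs_sub_le_iff]
  rcases lt_trichotomy x 0 with hx | hx | hx
  · constructor
    · have hle : x / lam ≤ x / (1 + t) := by
        rw [div_le_div_iff₀ hlam h1t']; nlinarith
      have hPP : PhiPlus t x = Phi (x / (1 + t)) := by
        simp [PhiPlus, Real.sign_of_neg hx]
      calc Phi (x / lam) - Phi x ≤ Phi (x / (1 + t)) - Phi x := by
            linarith [Phi_mono hle]
        _ = PhiPlus t x - Phi x := by rw [hPP]
        _ ≤ gammaFn t := gamma_ge t x
    · have hle : x / (1 - t) ≤ x / lam := by
        rw [div_le_div_iff₀ h1t hlam]; nlinarith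
      have hz : (0:ℝ) < -x := by linarith
      have hrefl : Phi x - Phi (x / (1 - t)) = Phi (-x / (1 - t)) - Phi (-x) := by
        rw [Phi_reflect (x / (1 - t)) x, neg_div]
      have hPP : PhiPlus t (-x) = Phi (-x / (1 - t)) := by
        simp [PhiPlus, Real.sign_of_pos hz]
      calc Phi x - Phi (x / lam) ≤ Phi x - Phi (x / (1 - t)) := by
            linarith [Phi_mono hle]
        _ = PhiPlus t (-x) - Phi (-x) := by rw [hrefl, hPP]
        _ ≤ gammaFn t := gamma_ge t (-x)
  · subst hx; simp [gamma_nonneg t]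
  · constructor
    · have hle : x / lam ≤ x / (1 - t) := by
        rw [div_le_div_iff₀ hlam h1t]; nlinarith
      have hPP : PhiPlus t x = Phi (x / (1 - t)) := by
        simp [PhiPlus, Real.sign_of_pos hx]
      calc Phi (x / lam) - Phi x ≤ Phi (x / (1 - t)) - Phi x := by
            linarith [Phi_mono hle]
        _ = PhiPlus t x - Phi x := by rw [hPP]
        _ ≤ gammaFn t := gamma_ge t x
    · have hy : (0:ℝ) < x / (1 + t) := div_pos hx h1t'
      have hle1 : x / (1 + t) ≤ x / lam := by
        rw [div_le_div_iff₀ h1t' hlam]; nlinarith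
      have hle2 : x ≤ (x / (1 + t)) / (1 - t) := by
        rw [le_div_iff₀ h1t, le_div_iff₀ h1t']; nlinarith [mul_nonneg hx.le (mul_nonneg ht0 ht0)]
      have hPP : PhiPlus t (x / (1 + t)) = Phi ((x / (1 + t)) / (1 - t)) := by
        simp [PhiPlus, Real.sign_of_pos hy]
      calc Phi x - Phi (x / lam) ≤ Phi ((x / (1 + t)) / (1 - t)) - Phi (x / (1 + t)) := by
            linarith [Phi_mono hle1, Phi_mono hle2]
        _ = PhiPlus t (x / (1 + t)) - Phi (x / (1 + t)) := by rw [hPP]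
        _ ≤ gammaFn t := gamma_ge t (x / (1 + t))

theorem tube_inflation (F : ℝ → ℝ)
    (hrange : ∀ x, F x ∈ Set.Icc (0 : ℝ) 1)
    (hmono : Monotone F)
    (hrc : ∀ x, ContinuousWithinAt F (Set.Ici x) x)
    (hbot : Tendsto F atBot (nhds 0)) (htop : Tendsto F atTop (nhds 1))
    (lam ε t : ℝ) (hlam : 0 < lam) (hε : 0 < ε) (ht : t ∈ Set.Ico (0 : ℝ) 1)
    (hKS : dKS F Phi ≤ ε) (hclose : |1 - lam| ≤ t) :
    dKS (fun x => F (x / lam)) Phi ≤ ε + gammaFn t := by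
  have hbdd : ∀ y : ℝ, |F y - Phi y| ≤ 1 := by
    intro y
    have h1 := (hrange y).1; have h2 := (hrange y).2
    have h3 := Phi_nonneg y; have h4 := Phi_le_one y
    rw [abs_le]; constructor <;> linarith
  rw [dKS]
  apply ciSup_le
  intro x
  have tri : |F (x / lam) - Phi x| ≤ |F (x / lam) - Phi (x / lam)| + |Phi (x / lam) - Phi x| :=
    abs_sub_le _ _ _
  have h1 : |F (x / lam) - Phi (x / lam)| ≤ ε := by
    refine le_trans ?_ hKS
    exact le_ciSup (f := fun y => |F y - Phi y|) ⟨1, by rintro y ⟨z, rfl⟩; exact hbdd z⟩ (x / lam)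
  have h2 := Phi_dist_le t lam ht hlam hclose x
  linarith
end

section
/- For all t ∈ [0,1), γ(t) ≤ t/2. -/
open Real Set MeasureTheory intervalIntegral

noncomputable def phiD (u : ℝ) : ℝ := Real.exp (-u ^ 2 / 2) / Real.sqrt (2 * Real.pi)

lemma phiD_eq (u : ℝ) : phiD u = Real.exp (-(1/2) * u ^ 2) / Real.sqrt (2 * Real.pi) := by
  unfold phiD; ring_nf

lemma phiD_int : Integrable phiD := by
  have h : Integrable (fun u : ℝ => Real.exp (-(1/2) * u ^ 2)) :=
    integrable_exp_neg_mul_sq (by norm_num)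
  have := h.div_const (Real.sqrt (2 * Real.pi))
  refine this.congr ?_
  filter_upwards with u
  rw [phiD_eq]

lemma phiD_nonneg (u : ℝ) : 0 ≤ phiD u := by
  unfold phiD
  positivity

lemma phiD_anti {u v : ℝ} (hu : 0 ≤ u) (huv : u ≤ v) : phiD v ≤ phiD u := by
  unfold phiD
  have h : Real.exp (-v ^ 2 / 2) ≤ Real.exp (-u ^ 2 / 2) := by
    apply Real.exp_le_exp.2; nlinarith
  exact div_le_div_of_nonneg_right h (Real.sqrt_nonneg _)

lemma phiD_even (u : ℝ) : phiD (-u) = phiD u := by unfold phiD; rw [neg_pow]; ring_nf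

lemma phiD_Ioi : ∫ u in Ioi (0:ℝ), phiD u = 1 / 2 := by
  have h : ∫ u in Ioi (0:ℝ), Real.exp (-(1/2) * u ^ 2) = Real.sqrt (Real.pi / (1/2)) / 2 :=
    integral_gaussian_Ioi (1/2)
  have hs : Real.sqrt (Real.pi / (1/2)) = Real.sqrt (2 * Real.pi) := by norm_num [mul_comm]
  have hpos : 0 < Real.sqrt (2 * Real.pi) := Real.sqrt_pos.2 (by positivity)
  calc ∫ u in Ioi (0:ℝ), phiD u
      = (∫ u in Ioi (0:ℝ), Real.exp (-(1/2) * u ^ 2)) / Real.sqrt (2 * Real.pi) := by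
        rw [← MeasureTheory.integral_div]; exact setIntegral_congr_fun measurableSet_Ioi fun u _ => phiD_eq u
    _ = 1 / 2 := by rw [h, hs]; field_simp

lemma Phi_sub (a b : ℝ) : Phi b - Phi a = ∫ u in a..b, phiD u :=
  integral_Iic_sub_Iic phiD_int.integrableOn phiD_int.integrableOn

lemma key {c z : ℝ} (hc : 1 ≤ c) (hz : 0 ≤ z) :
    ∫ u in z..c*z, phiD u ≤ (1 - c⁻¹) / 2 := by
  have hc0 : (0:ℝ) < c := lt_of_lt_of_le one_pos hc
  have hii : ∀ a b : ℝ, IntervalIntegrable phiD volume a b :=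
    fun a b => phiD_int.intervalIntegrable
  have hcomp : Integrable (fun v => phiD (c * v)) := phiD_int.comp_mul_left' hc0.ne'
  have h1 : ∫ u in z..c*z, phiD u
      = (∫ u in (0:ℝ)..c*z, phiD u) - ∫ u in (0:ℝ)..z, phiD u :=
    (integral_interval_sub_left (hii 0 (c*z)) (hii 0 z)).symm
  have h3 : ∫ v in (0:ℝ)..z, phiD (c * v) = c⁻¹ * ∫ u in (0:ℝ)..c*z, phiD u := by
    rw [intervalIntegral.integral_comp_mul_left phiD hc0.ne', mul_zero, smul_eq_mul]
  have h2 : ∫ v in (0:ℝ)..z, phiD (c * v) ≤ ∫ v in (0:ℝ)..z, phiD v := by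
    apply intervalIntegral.integral_mono_on hz hcomp.intervalIntegrable (hii 0 z)
    intro v hv
    exact phiD_anti hv.1 (le_mul_of_one_le_left (hv.1) hc)
  have hIle : ∫ u in (0:ℝ)..c*z, phiD u ≤ 1 / 2 := by
    rw [intervalIntegral.integral_of_le (by positivity)]
    rw [← phiD_Ioi]
    apply setIntegral_mono_set phiD_int.integrableOn
    · filter_upwards with u using phiD_nonneg u
    · exact HasSubset.Subset.eventuallyLE Ioc_subset_Ioi_self
  have hInn : 0 ≤ ∫ u in (0:ℝ)..c*z, phiD u := by
    apply intervalIntegral.integral_nonneg (by positivity)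
    exact fun u _ => phiD_nonneg u
  have hci : c⁻¹ ≤ 1 := by
    rw [inv_le_one_iff₀]; right; exact hc
  calc ∫ u in z..c*z, phiD u
      = (∫ u in (0:ℝ)..c*z, phiD u) - ∫ u in (0:ℝ)..z, phiD u := h1
    _ ≤ (∫ u in (0:ℝ)..c*z, phiD u) - c⁻¹ * ∫ u in (0:ℝ)..c*z, phiD u := by
        rw [← h3]; linarith
    _ = (1 - c⁻¹) * ∫ u in (0:ℝ)..c*z, phiD u := by ring
    _ ≤ (1 - c⁻¹) * (1/2) := by
        apply mul_le_mul_of_nonneg_left hIle (by linarith)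
    _ = (1 - c⁻¹) / 2 := by ring

theorem gamma_le_half_t (t : ℝ) (ht : t ∈ Set.Ico (0 : ℝ) 1) : gammaFn t ≤ t / 2 := by
  obtain ⟨ht0, ht1⟩ := ht
  apply ciSup_le
  intro x
  rcases lt_trichotomy x 0 with hx | hx | hx
  · rw [PhiPlus, Real.sign_of_neg hx]
    have h1t : (0:ℝ) < 1 + t := by linarith
    have harg : x / (1 - (-1) * t) = x / (1 + t) := by ring_nf
    rw [harg, Phi_sub]
    have hflip : ∫ u in x..(x/(1+t)), phiD u
        = ∫ u in (-(x/(1+t)))..(-x), phiD u := by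
      rw [← intervalIntegral.integral_comp_neg]
      exact intervalIntegral.integral_congr fun u _ => (phiD_even u).symm
    rw [hflip]
    have hz : (0:ℝ) ≤ -(x/(1+t)) := by
      rw [le_neg]; exact (div_nonpos_iff.2 (Or.inr ⟨hx.le, h1t.le⟩) : x/(1+t) ≤ 0).trans_eq (neg_zero).symm
    have hcz : (1+t) * (-(x/(1+t))) = -x := by field_simp
    have := key (c := 1+t) (z := -(x/(1+t))) (by linarith) hz
    rw [hcz] at this
    refine this.trans ?_
    have hinv : 1 - t ≤ (1+t)⁻¹ := by
      rw [inv_eq_one_div, le_div_iff₀ h1t]; nlinarith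
    linarith
  · subst hx
    simp only [PhiPlus, Real.sign_zero, zero_mul, sub_zero, zero_div, sub_self]
    positivity
  · rw [PhiPlus, Real.sign_of_pos hx, one_mul]
    have h1t : (0:ℝ) < 1 - t := by linarith
    rw [Phi_sub]
    have hc1 : (1:ℝ) ≤ (1-t)⁻¹ := by
      nlinarith [inv_pos.2 h1t, mul_inv_cancel₀ h1t.ne']
    have hcz : x / (1 - t) = (1-t)⁻¹ * x := by rw [div_eq_inv_mul]
    rw [hcz]
    have := key (c := (1-t)⁻¹) (z := x) hc1 hx.le
    refine this.trans ?_
    rw [inv_inv]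
    linarith
end
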